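/- arXiv:2006.09943 — 2 statements merged into one kernel-verified Lean document; each statement's English description precedes it below -/
import Mathlib

section
/- Let L = ℤ^d, G a group, and α : L → G ≀ Sym(A) a group homomorphism, where A = L/L₁ for a finite-index subgroup L₁ ≤ L and the composite π∘α : L → Sym(A) is the map induced by the Cayley embedding of A. Let X be a G-set, let X^A carry the induced G ≀ Sym(A)-action, and let ρ_e : L → G be the map of sets given by projection onto the coordinate of the identity e ∈ A. Then ρ_e restricted to L₁ is a group homomorphism, and the evaluation map at e gives a bijection from the fixed points (X^A)^{im α} to the fixed points X^{im(ρ_e|_{L₁})}. -/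
/-! For `l ∈ L₁` the permutation part of `α l` is trivial, so the wreath product
multiplication restricts to ordinary multiplication in the coordinate `e`. A fixed point `x` of
`im α` satisfies `x (l L₁) = (α l).left (l L₁) • x e`, so it is determined by `x e`; conversely,
for `y` fixed by `ρ_e(L₁)` this formula is independent of the representative `l` and defines a
fixed point with `x e = y`. -/

/-- Coordinate permutation as a multiplicative automorphism of `A → G`:
`(e • f) a = f (e⁻¹ a)`. -/
def permCongrMul {A : Type*} (G : Type*) [Group G] (e : Equiv.Perm A) : (A → G) ≃* (A → G) :=
  { Equiv.arrowCongr e (Equiv.refl G) with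
    map_mul' := fun _ _ => rfl }

/-- The permutation action of `Equiv.Perm A` on `A → G` as a homomorphism into `MulAut`. -/
def wreathphi (A : Type*) (G : Type*) [Group G] : Equiv.Perm A →* MulAut (A → G) where
  toFun := permCongrMul G
  map_one' := by ext f a; rfl
  map_mul' := fun e₁ e₂ => by ext f a; rfl

/-- The wreath product `G ≀ Sym(A)`, realized as the semidirect product
`(A → G) ⋊ Equiv.Perm A` for the coordinate-permutation action; an element `w` acts
on `x : A → X` (for a `G`-set `X`) by `(w • x) a = w.left a • x (w.right⁻¹ a)`. -/
abbrev Wreath (G : Type*) [Group G] (A : Type*) :=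
  SemidirectProduct (A → G) (Equiv.Perm A) (wreathphi A G)

def Wreath.IsCayleyLift {L G : Type*} [Group L] [Group G] (N : Subgroup L) [N.Normal]
    (α : L →* Wreath G (L ⧸ N)) : Prop :=
  SemidirectProduct.rightHom.comp α =
    (MulAction.toPermHom (L ⧸ N) (L ⧸ N)).comp (QuotientGroup.mk' N)

namespace Wreath

theorem mul_left_apply {G A : Type*} [Group G] (w v : Wreath G A) (a : A) :
    (w * v).left a = w.left a * v.left (w.right⁻¹ a) :=
  rfl

variable {L G X : Type*} [Group L] [Group G] [MulAction G X] {N : Subgroup L} [N.Normal]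
  {α : L →* Wreath G (L ⧸ N)}

namespace IsCayleyLift

theorem right_inv_apply (hα : IsCayleyLift N α) (l : L) (a : L ⧸ N) :
    (α l).right⁻¹ a = (l : L ⧸ N)⁻¹ * a := by
  rw [show (α l).right = MulAction.toPerm (l : L ⧸ N) from DFunLike.congr_fun hα l]
  rfl

theorem left_mul_apply (hα : IsCayleyLift N α) (l l' : L) (a : L ⧸ N) :
    (α (l * l')).left a = (α l).left a * (α l').left ((l : L ⧸ N)⁻¹ * a) := by
  rw [map_mul, mul_left_apply, hα.right_inv_apply]

theorem left_mul_apply_of_mem (hα : IsCayleyLift N α) {l : L} (hl : l ∈ N) (l' : L)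
    (a : L ⧸ N) : (α (l * l')).left a = (α l).left a * (α l').left a := by
  rw [hα.left_mul_apply, (QuotientGroup.eq_one_iff l).mpr hl, inv_one, one_mul]

theorem apply_mk_of_fixed (hα : IsCayleyLift N α) {x : L ⧸ N → X}
    (hx : ∀ l, (fun a => (α l).left a • x ((α l).right⁻¹ a)) = x) (l : L) :
    x l = (α l).left l • x 1 := by
  have h := congrFun (hx l) l
  rw [hα.right_inv_apply, inv_mul_cancel] at h
  exact h.symm

theorem eq_of_fixed (hα : IsCayleyLift N α) {x x' : L ⧸ N → X}
    (hx : ∀ l, (fun a => (α l).left a • x ((α l).right⁻¹ a)) = x)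
    (hx' : ∀ l, (fun a => (α l).left a • x' ((α l).right⁻¹ a)) = x') (h₁ : x 1 = x' 1) :
    x = x' :=
  funext <| QuotientGroup.mk_surjective.forall.2 fun l => by
    rw [hα.apply_mk_of_fixed hx, hα.apply_mk_of_fixed hx', h₁]

theorem left_smul_eq_of_mk_eq (hα : IsCayleyLift N α) {y : X}
    (hy : ∀ n ∈ N, (α n).left 1 • y = y) {l l' : L} (h : (l : L ⧸ N) = l') :
    (α l).left l • y = (α l').left l' • y := by
  have hn : l⁻¹ * l' ∈ N := QuotientGroup.eq.mp h
  calc (α l).left l • y = (α l).left l • (α (l⁻¹ * l')).left 1 • y := by rw [hy _ hn]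
    _ = (α (l * (l⁻¹ * l'))).left l • y := by
      rw [hα.left_mul_apply l, inv_mul_cancel, mul_smul]
    _ = (α l').left l' • y := by rw [mul_inv_cancel_left, h]

end IsCayleyLift

/-- Depends on the chosen representatives `a.out` unless `y` is fixed by every `(α n).left 1`,
`n ∈ N` (see `cayleyExtend_mk`). -/
noncomputable def cayleyExtend (α : L →* Wreath G (L ⧸ N)) (y : X) : L ⧸ N → X :=
  fun a => (α a.out).left a • y

theorem cayleyExtend_mk (hα : IsCayleyLift N α) {y : X} (hy : ∀ n ∈ N, (α n).left 1 • y = y)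
    (l : L) : cayleyExtend α y l = (α l).left l • y := by
  have h := hα.left_smul_eq_of_mk_eq hy (QuotientGroup.out_eq' (l : L ⧸ N))
  rwa [QuotientGroup.out_eq'] at h

theorem cayleyExtend_one (hα : IsCayleyLift N α) {y : X} (hy : ∀ n ∈ N, (α n).left 1 • y = y) :
    cayleyExtend α y 1 = y := by
  rw [← QuotientGroup.mk_one, cayleyExtend_mk hα hy, map_one, SemidirectProduct.one_left,
    Pi.one_apply, one_smul]

theorem cayleyExtend_fixed (hα : IsCayleyLift N α) {y : X} (hy : ∀ n ∈ N, (α n).left 1 • y = y)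
    (l : L) : (fun a => (α l).left a • cayleyExtend α y ((α l).right⁻¹ a)) = cayleyExtend α y :=
  funext <| QuotientGroup.mk_surjective.forall.2 fun m => by
    have hm : ((l⁻¹ * m : L) : L ⧸ N) = (l : L ⧸ N)⁻¹ * m := rfl
    rw [hα.right_inv_apply, ← hm, cayleyExtend_mk hα hy, cayleyExtend_mk hα hy, ← mul_smul, hm,
      ← hα.left_mul_apply, mul_inv_cancel_left]

end Wreath

theorem stmt4_general (d : ℕ) (G X : Type*) [Group G] [MulAction G X]
    (L₁ : Subgroup (Multiplicative (Fin d → ℤ))) [L₁.Normal]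
    (α : Multiplicative (Fin d → ℤ) →* Wreath G (Multiplicative (Fin d → ℤ) ⧸ L₁))
    (hα : SemidirectProduct.rightHom.comp α =
      (MulAction.toPermHom (Multiplicative (Fin d → ℤ) ⧸ L₁)
          (Multiplicative (Fin d → ℤ) ⧸ L₁)).comp (QuotientGroup.mk' L₁)) :
    -- `ρ_e` is a group homomorphism on `L₁`
    (∀ l l' : Multiplicative (Fin d → ℤ), l ∈ L₁ → l' ∈ L₁ →
      (α (l * l')).left 1 = (α l).left 1 * (α l').left 1)
    -- evaluation at `e = 1` maps `im α`-fixed points to `im (ρ_e|_{L₁})`-fixed points …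
    ∧ (∀ x : (Multiplicative (Fin d → ℤ) ⧸ L₁) → X,
        (∀ l, (fun a => (α l).left a • x (((α l).right)⁻¹ a)) = x) →
        ∀ l ∈ L₁, (α l).left 1 • x 1 = x 1)
    -- … and bijectively so
    ∧ (∀ y : X, (∀ l ∈ L₁, (α l).left 1 • y = y) →
        ∃! x : (Multiplicative (Fin d → ℤ) ⧸ L₁) → X,
          (∀ l, (fun a => (α l).left a • x (((α l).right)⁻¹ a)) = x) ∧ x 1 = y) := by
  replace hα : Wreath.IsCayleyLift L₁ α := hα
  refine ⟨fun l l' hl _ => hα.left_mul_apply_of_mem hl l' 1, fun x hx l hl => ?_, fun y hy => ?_⟩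
  · have h := hα.apply_mk_of_fixed hx l
    rw [(QuotientGroup.eq_one_iff l).mpr hl] at h
    exact h.symm
  · have hfixed := Wreath.cayleyExtend_fixed hα hy
    have hone := Wreath.cayleyExtend_one hα hy
    exact ⟨Wreath.cayleyExtend α y, ⟨hfixed, hone⟩,
      fun x ⟨hx, hx₁⟩ => hα.eq_of_fixed hx hfixed (hx₁.trans hone.symm)⟩

/-- Let `L = ℤ^d`, `L₁ ≤ L` of finite index, `A = L/L₁`, and let
`α : L → G ≀ Sym(A)` be a homomorphism whose composite with the projection to `Sym(A)`
is the Cayley embedding of `A` composed with the quotient map.  Let `X` be a `G`-set and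
let `ρ_e : L → G` be `l ↦ (α l).left e` (the coordinate of the identity `e = 1 ∈ A`).
Then `ρ_e` restricted to `L₁` is a group homomorphism, and evaluation at `e` is a
bijection from the fixed points `(X^A)^{im α}` onto the fixed points `X^{im (ρ_e|_{L₁})}`. -/
theorem stmt4 (d : ℕ) (G X : Type*) [Group G] [MulAction G X]
    (L₁ : Subgroup (Multiplicative (Fin d → ℤ))) [L₁.Normal] [L₁.FiniteIndex]
    (α : Multiplicative (Fin d → ℤ) →* Wreath G (Multiplicative (Fin d → ℤ) ⧸ L₁))
    (hα : SemidirectProduct.rightHom.comp α =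
      (MulAction.toPermHom (Multiplicative (Fin d → ℤ) ⧸ L₁)
          (Multiplicative (Fin d → ℤ) ⧸ L₁)).comp (QuotientGroup.mk' L₁)) :
    -- `ρ_e` is a group homomorphism on `L₁`
    (∀ l l' : Multiplicative (Fin d → ℤ), l ∈ L₁ → l' ∈ L₁ →
      (α (l * l')).left 1 = (α l).left 1 * (α l').left 1)
    -- evaluation at `e = 1` maps `im α`-fixed points to `im (ρ_e|_{L₁})`-fixed points …
    ∧ (∀ x : (Multiplicative (Fin d → ℤ) ⧸ L₁) → X,
        (∀ l, (fun a => (α l).left a • x (((α l).right)⁻¹ a)) = x) →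
        ∀ l ∈ L₁, (α l).left 1 • x 1 = x 1)
    -- … and bijectively so
    ∧ (∀ y : X, (∀ l ∈ L₁, (α l).left 1 • y = y) →
        ∃! x : (Multiplicative (Fin d → ℤ) ⧸ L₁) → X,
          (∀ l, (fun a => (α l).left a • x (((α l).right)⁻¹ a)) = x) ∧ x 1 = y) :=
  stmt4_general d G X L₁ α hα
end

section
/- With P_n as above, for all class functions f on a finite group G and all j, k ≥ 1: the restriction of P_{j+k}(f) along the inclusion (G ≀ Σ_j) × (G ≀ Σ_k) ↪ G ≀ Σ_{j+k} equals the exterior product P_j(f) ⊠ P_k(f), i.e., P_{j+k}(f)(x, y) = P_j(f)(x) · P_k(f)(y) for x ∈ G ≀ Σ_j and y ∈ G ≀ Σ_k. -/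
/-- The cycle product `g_{i} g_{σ(i)} ⋯ g_{σ^{m-1}(i)} ∈ G`, `m` the cycle length at `i`. -/
noncomputable def cycleProd {G : Type*} [Group G] {n : ℕ} (g : Fin n → G)
    (σ : Equiv.Perm (Fin n)) (i : Fin n) : G :=
  ((List.range (Function.minimalPeriod (⇑σ) i)).map (fun j => g ((σ ^ j) i))).prod

/-- `R` contains exactly one representative of each cycle of `σ`. -/
def IsCycleTransversal {n : ℕ} (σ : Equiv.Perm (Fin n)) (R : Finset (Fin n)) : Prop :=
  ∀ j : Fin n, ∃! i, i ∈ R ∧ σ.SameCycle i j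

/-- The total power operation `P_n(f)(g₁,…,gₙ,σ) = ∏_{cycles} f(cycle product)`,
computed with respect to a chosen set `R` of cycle representatives. -/
noncomputable def powerOp {G : Type*} [Group G] {n : ℕ} (f : G → ℂ) (g : Fin n → G)
    (σ : Equiv.Perm (Fin n)) (R : Finset (Fin n)) : ℂ :=
  ∏ i ∈ R, f (cycleProd g σ i)

/-- The block inclusion `Σ_j × Σ_k ⊆ Σ_{j+k}` on permutations. -/
def blockPerm {j k : ℕ} (σ : Equiv.Perm (Fin j)) (τ : Equiv.Perm (Fin k)) :
    Equiv.Perm (Fin (j + k)) :=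
  (Equiv.permCongr finSumFinEquiv) (Equiv.sumCongr σ τ)

/-!
A cycle of `blockPerm σ τ` lies inside one of the two blocks, where it is a cycle of `σ` or of
`τ` with the same cycle product: the block inclusions intertwine `σ`, `τ` with `blockPerm σ τ`.
Hence the preimages of a transversal `R` of `blockPerm σ τ` are transversals of `σ` and `τ`, and
the product over `R` splits into the two power operations. The given `R₁`, `R₂` may be other
transversals, which does not matter because `f` is a class function: moving the base point of a
cycle one step along it conjugates the cycle product by `g i`.
-/

open Function Equiv

section Semiconj

variable {α β : Type*} {e : α → β}

theorem Function.Semiconj.minimalPeriod_eq {f : α → α} {g : β → β} (he : Injective e)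
    (h : Semiconj e f g) (a : α) : minimalPeriod g (e a) = minimalPeriod f a :=
  minimalPeriod_eq_minimalPeriod_iff.2 fun n => by
    simp only [IsPeriodicPt, IsFixedPt, ← h.iterate_right n a, he.eq_iff]

variable {σ : Perm α} {π : Perm β}

theorem Function.Semiconj.perm_pow_apply (h : Semiconj e σ π) (m : ℕ) (a : α) :
    (π ^ m) (e a) = e ((σ ^ m) a) := by
  rw [← Perm.iterate_eq_pow, ← Perm.iterate_eq_pow, h.iterate_right m a]

theorem Function.Semiconj.sameCycle [Finite α] (h : Semiconj e σ π) {a b : α}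
    (hab : σ.SameCycle a b) : π.SameCycle (e a) (e b) := by
  obtain ⟨m, -, rfl⟩ := hab.exists_pow_eq'
  exact ⟨m, by rw [zpow_natCast, h.perm_pow_apply]⟩

theorem Function.Semiconj.exists_of_sameCycle [Finite β] (h : Semiconj e σ π) {a : α} {y : β}
    (hy : π.SameCycle (e a) y) : ∃ b, σ.SameCycle a b ∧ e b = y := by
  obtain ⟨m, -, rfl⟩ := hy.exists_pow_eq'
  exact ⟨(σ ^ m) a, Perm.sameCycle_pow_right.2 .rfl, (h.perm_pow_apply m a).symm⟩

theorem Equiv.Perm.SameCycle.apply_eq_of_invariant [Finite α] {F : α → β}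
    (hF : ∀ x, F (σ x) = F x) {a b : α} (hab : σ.SameCycle a b) : F b = F a := by
  obtain ⟨m, -, rfl⟩ := hab.exists_pow_eq'
  clear hab
  induction m with
  | zero => rfl
  | succ m ih => rw [pow_succ', Perm.mul_apply, hF, ih]

end Semiconj

theorem Fin.castAdd_ne_natAdd {j k : ℕ} (a : Fin j) (b : Fin k) : castAdd k a ≠ natAdd j b :=
  Fin.ne_of_val_ne (by simp only [val_castAdd, val_natAdd]; omega)

theorem Finset.prod_eq_prod_preimage_castAdd_mul_prod_preimage_natAdd {j k : ℕ} {M : Type*}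
    [CommMonoid M] (R : Finset (Fin (j + k))) (F : Fin (j + k) → M) :
    ∏ x ∈ R, F x =
      (∏ a ∈ R.preimage (Fin.castAdd k) (Fin.castAdd_injective j k).injOn, F (Fin.castAdd k a)) *
        ∏ b ∈ R.preimage (Fin.natAdd j) (Fin.natAdd_injective k j).injOn, F (Fin.natAdd j b) := by
  classical
  rw [prod_preimage', prod_preimage',
    ← prod_filter_mul_prod_filter_not R (· ∈ Set.range (Fin.castAdd k))]
  congr 2
  ext x
  induction x using Fin.addCases <;>
    simp [Fin.castAdd_ne_natAdd, (Fin.castAdd_ne_natAdd _ _).symm]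

namespace IsCycleTransversal

variable {m n : ℕ} {σ : Perm (Fin n)} {R : Finset (Fin n)}

theorem eq_of_sameCycle (hR : IsCycleTransversal σ R) {a b : Fin n} (ha : a ∈ R) (hb : b ∈ R)
    (hab : σ.SameCycle a b) : a = b :=
  (hR b).unique ⟨ha, hab⟩ ⟨hb, .rfl⟩

theorem preimage {τ : Perm (Fin m)} {e : Fin m → Fin n} (hR : IsCycleTransversal σ R)
    (he : Injective e) (h : Semiconj e τ σ) : IsCycleTransversal τ (R.preimage e he.injOn) := by
  intro a
  obtain ⟨y, ⟨hyR, hya⟩, hy⟩ := hR (e a)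
  obtain ⟨b, hab, rfl⟩ := h.exists_of_sameCycle hya.symm
  refine ⟨b, ⟨Finset.mem_preimage.2 hyR, hab.symm⟩, fun i ⟨hiR, hia⟩ => he ?_⟩
  exact hy (e i) ⟨Finset.mem_preimage.1 hiR, h.sameCycle hia⟩

end IsCycleTransversal

section CycleProd

variable {G : Type*} [Group G] {n : ℕ}

theorem cycleProd_apply (g : Fin n → G) (σ : Perm (Fin n)) (i : Fin n) :
    cycleProd g σ (σ i) = (g i)⁻¹ * cycleProd g σ i * g i := by
  have hi := σ.injective.mem_periodicPts i
  obtain ⟨p, hp⟩ := Nat.exists_eq_add_one.2 (minimalPeriod_pos_of_mem_periodicPts hi)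
  have hσp : (σ ^ (p + 1)) i = i := by rw [← hp, ← Perm.iterate_eq_pow, iterate_minimalPeriod]
  set A := ((List.range p).map fun m => g ((σ ^ (m + 1)) i)).prod
  have hi_eq : cycleProd g σ i = g i * A := by
    rw [cycleProd, hp, List.prod_range_succ', pow_zero, Perm.one_apply]
  have hσi_eq : cycleProd g σ (σ i) = A * g i := by
    simp only [cycleProd, minimalPeriod_apply hi, hp, List.prod_range_succ, ← Perm.mul_apply,
      ← pow_succ, hσp, A]
  rw [hi_eq, hσi_eq]
  group

theorem cycleProd_comp_of_semiconj {m : ℕ} {e : Fin m → Fin n} {τ : Perm (Fin m)}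
    {σ : Perm (Fin n)} (he : Injective e) (h : Semiconj e τ σ) (g : Fin n → G) (i : Fin m) :
    cycleProd g σ (e i) = cycleProd (fun x => g (e x)) τ i := by
  simp only [cycleProd, h.minimalPeriod_eq he, h.perm_pow_apply]

end CycleProd

section PowerOp

variable {G : Type*} [Group G] {n : ℕ} (f : G → ℂ) (hf : ∀ g h : G, f (h * g * h⁻¹) = f g)
include hf

theorem apply_cycleProd_of_sameCycle (g : Fin n → G) {σ : Perm (Fin n)} {a b : Fin n}
    (hab : σ.SameCycle a b) : f (cycleProd g σ b) = f (cycleProd g σ a) :=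
  hab.apply_eq_of_invariant (F := fun x => f (cycleProd g σ x)) fun i => by
    simpa only [cycleProd_apply, inv_inv] using hf (cycleProd g σ i) (g i)⁻¹

theorem powerOp_eq_of_isCycleTransversal (g : Fin n → G) {σ : Perm (Fin n)}
    {R R' : Finset (Fin n)} (hR : IsCycleTransversal σ R) (hR' : IsCycleTransversal σ R') :
    powerOp f g σ R = powerOp f g σ R' := by
  choose r hr using fun a => (hR a).exists
  choose r' hr' using fun a => (hR' a).exists
  refine Finset.prod_nbij' r' r (fun a _ => (hr' a).1) (fun a _ => (hr a).1)
    (fun a ha => hR.eq_of_sameCycle (hr _).1 ha (((hr _).2).trans (hr' a).2))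
    (fun a ha => hR'.eq_of_sameCycle (hr' _).1 ha (((hr' _).2).trans (hr a).2))
    fun a _ => apply_cycleProd_of_sameCycle f hf g (hr' a).2

end PowerOp

theorem semiconj_castAdd_blockPerm {j k : ℕ} (σ : Perm (Fin j)) (τ : Perm (Fin k)) :
    Semiconj (Fin.castAdd k) σ (blockPerm σ τ) := fun i => by
  simp [blockPerm, finSumFinEquiv_symm_apply_castAdd]

theorem semiconj_natAdd_blockPerm {j k : ℕ} (σ : Perm (Fin j)) (τ : Perm (Fin k)) :
    Semiconj (Fin.natAdd j) τ (blockPerm σ τ) := fun i => by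
  simp [blockPerm, finSumFinEquiv_symm_apply_natAdd]

theorem stmt16_general {G : Type*} [Group G] (j k : ℕ)
    (f : G → ℂ) (hf : ∀ g h : G, f (h * g * h⁻¹) = f g)
    (g₁ : Fin j → G) (g₂ : Fin k → G) (σ : Equiv.Perm (Fin j)) (τ : Equiv.Perm (Fin k))
    (R : Finset (Fin (j + k))) (R₁ : Finset (Fin j)) (R₂ : Finset (Fin k))
    (hR : IsCycleTransversal (blockPerm σ τ) R) (hR₁ : IsCycleTransversal σ R₁)
    (hR₂ : IsCycleTransversal τ R₂) :
    powerOp f (Fin.append g₁ g₂) (blockPerm σ τ) R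
      = powerOp f g₁ σ R₁ * powerOp f g₂ τ R₂ := by
  have h₁ := semiconj_castAdd_blockPerm σ τ
  have h₂ := semiconj_natAdd_blockPerm σ τ
  rw [powerOp_eq_of_isCycleTransversal f hf g₁ hR₁ (hR.preimage (Fin.castAdd_injective j k) h₁),
    powerOp_eq_of_isCycleTransversal f hf g₂ hR₂ (hR.preimage (Fin.natAdd_injective k j) h₂),
    powerOp, Finset.prod_eq_prod_preimage_castAdd_mul_prod_preimage_natAdd]
  simp only [powerOp, cycleProd_comp_of_semiconj (Fin.castAdd_injective j k) h₁,
    cycleProd_comp_of_semiconj (Fin.natAdd_injective k j) h₂, Fin.append_left, Fin.append_right]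

/-- for a class function `f` on a finite group `G` and `j, k ≥ 1`, the
restriction of `P_{j+k}(f)` along `(G ≀ Σ_j) × (G ≀ Σ_k) ↪ G ≀ Σ_{j+k}` (block permutations
and concatenated tuples) equals the exterior product `P_j(f) ⊠ P_k(f)`. -/
theorem stmt16 {G : Type*} [Group G] [Finite G] (j k : ℕ) (hj : 1 ≤ j) (hk : 1 ≤ k)
    (f : G → ℂ) (hf : ∀ g h : G, f (h * g * h⁻¹) = f g)
    (g₁ : Fin j → G) (g₂ : Fin k → G) (σ : Equiv.Perm (Fin j)) (τ : Equiv.Perm (Fin k))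
    (R : Finset (Fin (j + k))) (R₁ : Finset (Fin j)) (R₂ : Finset (Fin k))
    (hR : IsCycleTransversal (blockPerm σ τ) R) (hR₁ : IsCycleTransversal σ R₁)
    (hR₂ : IsCycleTransversal τ R₂) :
    powerOp f (Fin.append g₁ g₂) (blockPerm σ τ) R
      = powerOp f g₁ σ R₁ * powerOp f g₂ τ R₂ :=
  stmt16_general j k f hf g₁ g₂ σ τ R R₁ R₂ hR hR₁ hR₂
end
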